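/- arXiv:math/0412375 — 4 statements merged into one kernel-verified Lean document; each statement's English description precedes it below -/
import Mathlib

section
/- Let γ_{k,r} = lim_{n→∞} EL_{n,k,r}/n and γ_k = lim_{n→∞} EL_n^{(k)}/n, where EL_{n,k,r} is the expected r-reach LCS length of two uniformly random strings of length n over a k-letter alphabet. Then γ_{k,r} ≤ γ_k for all r, γ_{k,r} ≥ EL_r^{(k)}/r, and consequently lim_{r→∞} γ_{k,r} = γ_k. -/
open Filter Finset

/-- `m` is the length of a common subsequence of `u` and `v`. -/
def IsCommonSubseqLen {k n : ℕ} (u v : Fin n → Fin k) (m : ℕ) : Prop :=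
  ∃ i j : Fin m → Fin n, StrictMono i ∧ StrictMono j ∧ ∀ t, u (i t) = v (j t)

/-- `m` is the length of an `r`-reach common subsequence of `u` and `v`. -/
def IsRReachCommonSubseqLen {k n : ℕ} (r : ℕ) (u v : Fin n → Fin k) (m : ℕ) : Prop :=
  ∃ i j : Fin m → Fin n, StrictMono i ∧ StrictMono j ∧
    ∀ t, u (i t) = v (j t) ∧ ((i t : ℤ) - (j t : ℤ)).natAbs ≤ r

/-- Length of a longest common subsequence. -/
noncomputable def lcsLen {k n : ℕ} (u v : Fin n → Fin k) : ℕ :=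
  sSup {m | IsCommonSubseqLen u v m}

/-- Length of a longest `r`-reach common subsequence. -/
noncomputable def lcsLenR {k n : ℕ} (r : ℕ) (u v : Fin n → Fin k) : ℕ :=
  sSup {m | IsRReachCommonSubseqLen r u v m}

/-- Expected LCS length of two uniformly random strings of length `n` over a
`k`-letter alphabet. -/
noncomputable def EL (k n : ℕ) : ℝ :=
  (1 / (k : ℝ) ^ (2 * n)) *
    ∑ u : Fin n → Fin k, ∑ v : Fin n → Fin k, (lcsLen u v : ℝ)

/-- Expected `r`-reach LCS length. -/
noncomputable def ELR (k r n : ℕ) : ℝ :=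
  (1 / (k : ℝ) ^ (2 * n)) *
    ∑ u : Fin n → Fin k, ∑ v : Fin n → Fin k, (lcsLenR r u v : ℝ)

/-!
An `r`-reach common subsequence is a common subsequence, so `γ_{k,r} ≤ γ_k`. Concatenating
`r`-reach common subsequences of the two halves of a pair of strings gives one of the whole pair,
so `n ↦ EL_{n,k,r}` is superadditive and, by Fekete's lemma, `γ_{k,r} ≥ EL_{n,k,r} / n` for every
`n ≥ 1`. For `n = r` the reach constraint is vacuous, so `γ_{k,r} ≥ EL_r / r → γ_k`.
-/

section LCS

variable {k n r m : ℕ} {u v : Fin n → Fin k}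

lemma IsCommonSubseqLen.le_length (h : IsCommonSubseqLen u v m) : m ≤ n := by
  obtain ⟨i, _, hi, _, _⟩ := h
  simpa using Fintype.card_le_of_injective i hi.injective

lemma IsRReachCommonSubseqLen.isCommonSubseqLen (h : IsRReachCommonSubseqLen r u v m) :
    IsCommonSubseqLen u v m :=
  let ⟨i, j, hi, hj, hij⟩ := h
  ⟨i, j, hi, hj, fun t => (hij t).1⟩

lemma isRReachCommonSubseqLen_zero (r : ℕ) (u v : Fin n → Fin k) :
    IsRReachCommonSubseqLen r u v 0 :=
  ⟨Fin.elim0, Fin.elim0, fun a => a.elim0, fun a => a.elim0, fun t => t.elim0⟩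

lemma bddAbove_isCommonSubseqLen : BddAbove {m | IsCommonSubseqLen u v m} :=
  ⟨n, fun _ hm => hm.le_length⟩

lemma bddAbove_isRReachCommonSubseqLen : BddAbove {m | IsRReachCommonSubseqLen r u v m} :=
  ⟨n, fun _ hm => hm.isCommonSubseqLen.le_length⟩

lemma isRReachCommonSubseqLen_lcsLenR : IsRReachCommonSubseqLen r u v (lcsLenR r u v) :=
  Nat.sSup_mem ⟨0, isRReachCommonSubseqLen_zero r u v⟩ bddAbove_isRReachCommonSubseqLen

lemma lcsLenR_le_lcsLen : lcsLenR r u v ≤ lcsLen u v :=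
  csSup_le_csSup bddAbove_isCommonSubseqLen ⟨0, isRReachCommonSubseqLen_zero r u v⟩
    fun _ hm => hm.isCommonSubseqLen

lemma lcsLenR_eq_lcsLen_of_le (hn : n ≤ r + 1) : lcsLenR r u v = lcsLen u v := by
  unfold lcsLenR lcsLen
  congr 1
  ext m
  refine ⟨IsRReachCommonSubseqLen.isCommonSubseqLen, ?_⟩
  rintro ⟨i, j, hi, hj, hij⟩
  refine ⟨i, j, hi, hj, fun t => ⟨hij t, ?_⟩⟩
  have := (i t).isLt
  have := (j t).isLt
  omega

lemma strictMono_append_castAdd_natAdd {m₁ m₂ a b : ℕ} {i₁ : Fin m₁ → Fin a}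
    {i₂ : Fin m₂ → Fin b} (h₁ : StrictMono i₁) (h₂ : StrictMono i₂) :
    StrictMono (Fin.append (Fin.castAdd b ∘ i₁) (Fin.natAdd a ∘ i₂)) := by
  intro x y hxy
  induction x using Fin.addCases <;> induction y using Fin.addCases <;>
    simp only [Fin.append_left, Fin.append_right, Function.comp_apply] at hxy ⊢
  · exact (Fin.strictMono_castAdd b).comp h₁ ((Fin.strictMono_castAdd m₂).lt_iff_lt.1 hxy)
  · simp only [Fin.lt_def, Fin.val_castAdd, Fin.val_natAdd]
    omega
  · simp only [Fin.lt_def, Fin.val_castAdd, Fin.val_natAdd] at hxy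
    omega
  · exact (Fin.strictMono_natAdd a).comp h₂ ((Fin.strictMono_natAdd m₁).lt_iff_lt.1 hxy)

lemma IsRReachCommonSubseqLen.append {a b m₁ m₂ : ℕ} {u₁ v₁ : Fin a → Fin k}
    {u₂ v₂ : Fin b → Fin k} (h₁ : IsRReachCommonSubseqLen r u₁ v₁ m₁)
    (h₂ : IsRReachCommonSubseqLen r u₂ v₂ m₂) :
    IsRReachCommonSubseqLen r (Fin.append u₁ u₂) (Fin.append v₁ v₂) (m₁ + m₂) := by
  obtain ⟨i₁, j₁, hi₁, hj₁, hij₁⟩ := h₁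
  obtain ⟨i₂, j₂, hi₂, hj₂, hij₂⟩ := h₂
  refine ⟨_, _, strictMono_append_castAdd_natAdd hi₁ hi₂,
    strictMono_append_castAdd_natAdd hj₁ hj₂, fun t => ?_⟩
  induction t using Fin.addCases with
  | left t => simpa using hij₁ t
  | right t => simpa using hij₂ t

end LCS

section Expectation

variable {k r : ℕ}

lemma lcsLenR_add_lcsLenR_le_lcsLenR_append {a b : ℕ} (u₁ v₁ : Fin a → Fin k)
    (u₂ v₂ : Fin b → Fin k) :
    lcsLenR r u₁ v₁ + lcsLenR r u₂ v₂ ≤ lcsLenR r (Fin.append u₁ u₂) (Fin.append v₁ v₂) :=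
  le_csSup bddAbove_isRReachCommonSubseqLen
    (isRReachCommonSubseqLen_lcsLenR.append isRReachCommonSubseqLen_lcsLenR)

lemma sum_lcsLenR_append_ge (a b : ℕ) :
    (k : ℝ) ^ (2 * b) * ∑ u : Fin a → Fin k, ∑ v, (lcsLenR r u v : ℝ) +
      (k : ℝ) ^ (2 * a) * ∑ u : Fin b → Fin k, ∑ v, (lcsLenR r u v : ℝ) ≤
    ∑ u : Fin (a + b) → Fin k, ∑ v, (lcsLenR r u v : ℝ) := by
  calc _ = ∑ u₁ : Fin a → Fin k, ∑ v₁ : Fin a → Fin k, ∑ u₂ : Fin b → Fin k,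
        ∑ v₂ : Fin b → Fin k, ((lcsLenR r u₁ v₁ : ℝ) + lcsLenR r u₂ v₂) := by
        simp [sum_add_distrib, mul_sum, ← mul_assoc, ← pow_add, two_mul]
    _ ≤ ∑ u₁ : Fin a → Fin k, ∑ v₁ : Fin a → Fin k, ∑ u₂ : Fin b → Fin k,
        ∑ v₂ : Fin b → Fin k, (lcsLenR r (Fin.append u₁ u₂) (Fin.append v₁ v₂) : ℝ) := by
        gcongr with u₁ _ v₁ _ u₂ _ v₂ _
        exact_mod_cast lcsLenR_add_lcsLenR_le_lcsLenR_append u₁ v₁ u₂ v₂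
    _ = _ := by
        simp only [← (Fin.appendEquiv a b).sum_comp, Fintype.sum_prod_type]
        exact sum_congr rfl fun _ _ => sum_comm

lemma ELR_add_ELR_le_ELR_add (hk : 0 < k) (a b : ℕ) :
    ELR k r a + ELR k r b ≤ ELR k r (a + b) := by
  have key := sum_lcsLenR_append_ge (k := k) (r := r) a b
  have hk' : (0 : ℝ) < k := by exact_mod_cast hk
  unfold ELR
  rw [mul_add, pow_add]
  field_simp
  linarith

lemma ELR_le_EL (n : ℕ) : ELR k r n ≤ EL k n := by
  unfold ELR EL
  gcongr with u _ v _
  exact_mod_cast lcsLenR_le_lcsLen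

lemma ELR_eq_EL_of_le {n : ℕ} (hn : n ≤ r + 1) : ELR k r n = EL k n := by
  simp only [ELR, EL, lcsLenR_eq_lcsLen_of_le hn]

end Expectation

-- Fekete's lemma: the limit of `u n / n` is its supremum.
lemma div_le_of_superadditive_of_tendsto {u : ℕ → ℝ} {γ : ℝ} (hu : ∀ a b, u a + u b ≤ u (a + b))
    (hγ : Tendsto (fun n => u n / n) atTop (nhds γ)) {n : ℕ} (hn : n ≠ 0) : u n / n ≤ γ := by
  have hsub : Subadditive (-u) := fun a b => by simp only [Pi.neg_apply]; linarith [hu a b]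
  have hneg : Tendsto (fun n => (-u) n / n) atTop (nhds (-γ)) := by
    simpa only [Pi.neg_apply, neg_div] using hγ.neg
  have hlim := tendsto_nhds_unique hneg (hsub.tendsto_lim hneg.bddBelow_range)
  have := hsub.lim_le_div hneg.bddBelow_range hn
  rw [← hlim, Pi.neg_apply, neg_div] at this
  linarith

theorem gamma_r_le_gamma_and_tendsto (k : ℕ) (hk : 1 ≤ k)
    (γk : ℝ) (γkr : ℕ → ℝ)
    (hγk : Tendsto (fun n => EL k n / n) atTop (nhds γk))
    (hγkr : ∀ r, Tendsto (fun n => ELR k r n / n) atTop (nhds (γkr r))) :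
    (∀ r, γkr r ≤ γk) ∧
    (∀ r, 1 ≤ r → EL k r / r ≤ γkr r) ∧
    Tendsto γkr atTop (nhds γk) := by
  have hle (r : ℕ) : γkr r ≤ γk :=
    le_of_tendsto_of_tendsto' (hγkr r) hγk fun n =>
      div_le_div_of_nonneg_right (ELR_le_EL n) n.cast_nonneg
  have hge (r : ℕ) (hr : 1 ≤ r) : EL k r / r ≤ γkr r := by
    rw [← ELR_eq_EL_of_le r.le_succ]
    exact div_le_of_superadditive_of_tendsto (ELR_add_ELR_le_ELR_add hk) (hγkr r) (by omega)
  refine ⟨hle, hge, tendsto_of_tendsto_of_tendsto_of_le_of_le' hγk tendsto_const_nhds ?_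
    (.of_forall hle)⟩
  filter_upwards [eventually_ge_atTop 1] using hge
end

section
/- The r-reach dynamic programming recurrence is correct: if R_{i,0} = R_{0,j} = 0 and R_{i,j} = R_{i-1,j-1} + 1 when u(i) = v(j) and |i-j| ≤ r; R_{i,j} = max{R_{i,j-1}, R_{i-1,j}} when u(i) ≠ v(j) and |i-j| < r; R_{i,j} = R_{i,j-1} when j - i ≥ r and u(i) ≠ v(j), or j - i > r; and R_{i,j} = R_{i-1,j} when i - j ≥ r and u(i) ≠ v(j), or i - j > r; then R_{n,n} = L_r(u,v) for strings u, v of length n. -/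
/-- `m` is the length of an `r`-reach common subsequence of the length-`n`
prefixes of `u` and `v` (positions are 0-based). -/
def IsRReachCommonSubseqLenN {k : ℕ} (u v : ℕ → Fin k) (n r m : ℕ) : Prop :=
  ∃ i j : Fin m → ℕ, StrictMono i ∧ StrictMono j ∧
    ∀ t, i t < n ∧ j t < n ∧ u (i t) = v (j t) ∧ ((i t : ℤ) - (j t : ℤ)).natAbs ≤ r

/-- Length of a longest `r`-reach common subsequence of length-`n` prefixes. -/
noncomputable def lcsLenRN {k : ℕ} (u v : ℕ → Fin k) (n r : ℕ) : ℕ :=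
  sSup {m | IsRReachCommonSubseqLenN u v n r m}

/-- The `r`-reach dynamic program. `Rdp u v r i j` works with the length-`i`
prefix of `u` and the length-`j` prefix of `v`; in particular the cell
`(i+1, j+1)` compares the 0-based characters `u i` and `v j`. -/
def Rdp {k : ℕ} (u v : ℕ → Fin k) (r : ℕ) : ℕ → ℕ → ℕ
  | 0, _ => 0
  | _ + 1, 0 => 0
  | i + 1, j + 1 =>
    if u i = v j ∧ ((i : ℤ) - (j : ℤ)).natAbs ≤ r then
      Rdp u v r i j + 1
    else if ((i : ℤ) - (j : ℤ)).natAbs < r then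
      max (Rdp u v r (i + 1) j) (Rdp u v r i (j + 1))
    else if i ≤ j then  -- here (j+1) - (i+1) ≥ r
      Rdp u v r (i + 1) j
    else               -- here (i+1) - (j+1) ≥ r
      Rdp u v r i (j + 1)
  termination_by i j => i + j

namespace RdpAux

/-- Achievable lengths for prefixes of lengths `i`, `j`. -/
def S {k : ℕ} (u v : ℕ → Fin k) (r i j : ℕ) : Set ℕ :=
  {m | ∃ a b : Fin m → ℕ, StrictMono a ∧ StrictMono b ∧
    ∀ t, a t < i ∧ b t < j ∧ u (a t) = v (b t) ∧ ((a t : ℤ) - (b t : ℤ)).natAbs ≤ r}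

variable {k : ℕ} (u v : ℕ → Fin k)

lemma zero_mem (r i j : ℕ) : 0 ∈ S u v r i j :=
  ⟨Fin.elim0, Fin.elim0, fun s => s.elim0, fun s => s.elim0, fun t => t.elim0⟩

lemma mono {r i j i' j' : ℕ} (hi : i ≤ i') (hj : j ≤ j') :
    S u v r i j ⊆ S u v r i' j' := by
  rintro m ⟨a, b, ha, hb, h⟩
  exact ⟨a, b, ha, hb, fun t =>
    ⟨(h t).1.trans_le hi, (h t).2.1.trans_le hj, (h t).2.2⟩⟩

lemma le_of_strictMono {m : ℕ} {a : Fin m → ℕ} (ha : StrictMono a) (t : Fin m) :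
    (t : ℕ) ≤ a t := by
  obtain ⟨tv, ht⟩ := t
  induction tv with
  | zero => simp
  | succ p ih =>
    have hp : p < m := by omega
    have h1 := ih hp
    have h2 := ha (show (⟨p, hp⟩ : Fin m) < ⟨p + 1, ht⟩ from by simp [Fin.lt_def])
    simp only [Fin.val_mk] at h1 ⊢
    omega

lemma bddi {r i j m : ℕ} (h : m ∈ S u v r i j) : m ≤ i := by
  obtain ⟨a, b, ha, _, hc⟩ := h
  rcases Nat.eq_zero_or_pos m with rfl | hm
  · omega
  · have h1 := (hc ⟨m - 1, by omega⟩).1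
    have h2 := le_of_strictMono ha ⟨m - 1, by omega⟩
    simp only [Fin.val_mk] at h2
    omega

lemma bddj {r i j m : ℕ} (h : m ∈ S u v r i j) : m ≤ j := by
  obtain ⟨a, b, _, hb, hc⟩ := h
  rcases Nat.eq_zero_or_pos m with rfl | hm
  · omega
  · have h1 := (hc ⟨m - 1, by omega⟩).2.1
    have h2 := le_of_strictMono hb ⟨m - 1, by omega⟩
    simp only [Fin.val_mk] at h2
    omega

/-- Append a new last element. -/
def ext {m : ℕ} (a : Fin m → ℕ) (x : ℕ) : Fin (m + 1) → ℕ :=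
  fun t => if h : (t : ℕ) < m then a ⟨t, h⟩ else x

lemma strictMono_ext {m : ℕ} {a : Fin m → ℕ} (ha : StrictMono a) {x : ℕ}
    (h : ∀ t, a t < x) : StrictMono (ext a x) := by
  intro s t hst
  have hst' : (s : ℕ) < (t : ℕ) := hst
  unfold ext
  split_ifs with h1 h2 h2
  · exact ha (Fin.mk_lt_mk.mpr hst')
  · exact h _
  · omega
  · omega

lemma ext_lt {m : ℕ} (a : Fin m → ℕ) (x : ℕ) (t : Fin (m + 1)) :
    ((t : ℕ) = m ∧ ext a x t = x) ∨ ∃ h : (t : ℕ) < m, ext a x t = a ⟨t, h⟩ := by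
  unfold ext
  split_ifs with h1
  · exact Or.inr ⟨h1, rfl⟩
  · exact Or.inl ⟨by omega, rfl⟩

lemma mem_Rdp (r : ℕ) : ∀ N i j, i + j ≤ N → Rdp u v r i j ∈ S u v r i j := by
  intro N
  induction N with
  | zero =>
    intro i j h
    obtain ⟨rfl, rfl⟩ : i = 0 ∧ j = 0 := by omega
    simpa [Rdp] using zero_mem u v r 0 0
  | succ N ih =>
    intro i j hij
    match i, j with
    | 0, j => simpa [Rdp] using zero_mem u v r 0 j
    | i + 1, 0 => simpa [Rdp] using zero_mem u v r (i + 1) 0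
    | i + 1, j + 1 =>
      rw [Rdp]
      by_cases h1 : u i = v j ∧ ((i : ℤ) - (j : ℤ)).natAbs ≤ r
      · rw [if_pos h1]
        obtain ⟨a, b, ha, hb, hc⟩ := ih i j (by omega)
        refine ⟨ext a i, ext b j, strictMono_ext ha (fun t => (hc t).1),
          strictMono_ext hb (fun t => (hc t).2.1), fun t => ?_⟩
        rcases ext_lt a i t with ⟨hte, he⟩ | ⟨ht, he⟩ <;>
          rcases ext_lt b j t with ⟨hte', he'⟩ | ⟨ht', he'⟩
        · exact ⟨by omega, by omega, by rw [he, he']; exact h1.1,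
            by rw [he, he']; exact h1.2⟩
        · exact absurd ht' (by omega)
        · exact absurd ht (by omega)
        · have h5 := hc ⟨t, ht⟩
          exact ⟨by rw [he]; omega, by rw [he']; omega,
            by rw [he, he']; exact h5.2.2.1, by rw [he, he']; exact h5.2.2.2⟩
      · rw [if_neg h1]
        by_cases h2 : ((i : ℤ) - (j : ℤ)).natAbs < r
        · rw [if_pos h2]
          rcases le_total (Rdp u v r (i + 1) j) (Rdp u v r i (j + 1)) with h | h
          · rw [max_eq_right h]
            exact mono u v (by omega) le_rfl (ih i (j + 1) (by omega))
          · rw [max_eq_left h]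
            exact mono u v le_rfl (by omega) (ih (i + 1) j (by omega))
        · rw [if_neg h2]
          by_cases h3 : i ≤ j
          · rw [if_pos h3]
            exact mono u v le_rfl (by omega) (ih (i + 1) j (by omega))
          · rw [if_neg h3]
            exact mono u v (by omega) le_rfl (ih i (j + 1) (by omega))

lemma le_Rdp (r : ℕ) :
    ∀ N i j m, i + j ≤ N → m ∈ S u v r i j → m ≤ Rdp u v r i j := by
  intro N
  induction N with
  | zero =>
    intro i j m h hm
    have := bddi u v hm
    omega
  | succ N ih =>
    intro i j m hij hm
    match i, j with
    | 0, j => have := bddi u v hm; omega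
    | i + 1, 0 => have := bddj u v hm; omega
    | i + 1, j + 1 =>
      match m with
      | 0 => omega
      | p + 1 =>
        obtain ⟨a, b, ha, hb, hc⟩ := hm
        set L : Fin (p + 1) := Fin.last p with hL
        have haM : ∀ t : Fin (p + 1), a t ≤ a L := fun t => ha.monotone (Fin.le_last t)
        have hbM : ∀ t : Fin (p + 1), b t ≤ b L := fun t => hb.monotone (Fin.le_last t)
        have haL : a L < i + 1 := (hc L).1
        have hbL : b L < j + 1 := (hc L).2.1
        rw [Rdp]
        by_cases h1 : u i = v j ∧ ((i : ℤ) - (j : ℤ)).natAbs ≤ r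
        · rw [if_pos h1]
          have hmem : p ∈ S u v r i j := by
            refine ⟨fun t => a t.castSucc, fun t => b t.castSucc,
              fun s t hst => ha (Fin.castSucc_lt_castSucc_iff.mpr hst),
              fun s t hst => hb (Fin.castSucc_lt_castSucc_iff.mpr hst),
              fun t => ?_⟩
            have h5 := hc t.castSucc
            have h6 : a t.castSucc < a L := ha (Fin.castSucc_lt_last t)
            have h7 : b t.castSucc < b L := hb (Fin.castSucc_lt_last t)
            exact ⟨show a t.castSucc < i by omega, show b t.castSucc < j by omega,
              h5.2.2.1, h5.2.2.2⟩
          have := ih i j p (by omega) hmem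
          omega
        · rw [if_neg h1]
          by_cases h2 : ((i : ℤ) - (j : ℤ)).natAbs < r
          · rw [if_pos h2]
            have hne : a L < i ∨ b L < j := by
              by_contra hcon
              push_neg at hcon
              have hai : a L = i := by omega
              have hbj : b L = j := by omega
              have h5 := hc L
              rw [hai, hbj] at h5
              exact h1 ⟨h5.2.2.1, by omega⟩
            rcases hne with hne | hne
            · have hmem : p + 1 ∈ S u v r i (j + 1) :=
                ⟨a, b, ha, hb, fun t => ⟨by have := haM t; omega, (hc t).2.1,
                  (hc t).2.2⟩⟩
              have := ih i (j + 1) (p + 1) (by omega) hmem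
              exact this.trans (le_max_right _ _)
            · have hmem : p + 1 ∈ S u v r (i + 1) j :=
                ⟨a, b, ha, hb, fun t => ⟨(hc t).1, by have := hbM t; omega,
                  (hc t).2.2⟩⟩
              have := ih (i + 1) j (p + 1) (by omega) hmem
              exact this.trans (le_max_left _ _)
          · rw [if_neg h2]
            by_cases h3 : i ≤ j
            · rw [if_pos h3]
              have hbL' : b L < j := by
                by_contra hcon
                have hbj : b L = j := by omega
                have h5 := hc L
                rw [hbj] at h5
                have hai : a L = i := by omega
                rw [hai] at h5
                exact h1 ⟨h5.2.2.1, by omega⟩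
              have hmem : p + 1 ∈ S u v r (i + 1) j :=
                ⟨a, b, ha, hb, fun t => ⟨(hc t).1, by have := hbM t; omega,
                  (hc t).2.2⟩⟩
              exact ih (i + 1) j (p + 1) (by omega) hmem
            · rw [if_neg h3]
              have haL' : a L < i := by
                by_contra hcon
                have hai : a L = i := by omega
                have h5 := hc L
                rw [hai] at h5
                have hbj : b L = j := by omega
                rw [hbj] at h5
                exact h1 ⟨h5.2.2.1, by omega⟩
              have hmem : p + 1 ∈ S u v r i (j + 1) :=
                ⟨a, b, ha, hb, fun t => ⟨by have := haM t; omega, (hc t).2.1,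
                  (hc t).2.2⟩⟩
              exact ih i (j + 1) (p + 1) (by omega) hmem

end RdpAux

/-- Correctness of the `r`-reach dynamic programming recurrence. -/
theorem Rdp_correct {k : ℕ} (u v : ℕ → Fin k) (r n : ℕ) :
    Rdp u v r n n = lcsLenRN u v n r := by
  have hset : {m | IsRReachCommonSubseqLenN u v n r m} = RdpAux.S u v r n n := rfl
  have h1 : Rdp u v r n n ∈ RdpAux.S u v r n n :=
    RdpAux.mem_Rdp u v r (n + n) n n le_rfl
  have h2 : ∀ m ∈ RdpAux.S u v r n n, m ≤ Rdp u v r n n :=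
    fun m hm => RdpAux.le_Rdp u v r (n + n) n n m le_rfl hm
  rw [lcsLenRN, hset]
  exact le_antisymm (le_csSup ⟨Rdp u v r n n, h2⟩ h1)
    (csSup_le ⟨0, RdpAux.zero_mem u v r n n⟩ h2)
end

section
/- For the Bernoulli matching model with parameter k and 1-reach, the asymptotic constant is γ_{k,1}^B = (3k+2)/(k²+3k+1). Equivalently, 1 is a simple root λ = 1 of the characteristic polynomial g(λ,b) at b = 1, and the implicitly defined Perron root f₁(b) satisfies df₁/db |_{b=1} = (3k+2)/(k²+3k+1), where g(λ,b) = (1/k⁵)(−λk+b)(b³ − b²kλ(k+2) + bλ(k³ + 2k³λ − 3k² + k²λ + 3k − 1) + λ²k(k³ − λk³ − 3k² + 3k − 1)). -/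
open Filter

/-- The characteristic polynomial of the 1-reach Bernoulli matching transfer
matrix, as a function of `l` (the eigenvalue variable λ) and `b`. -/
noncomputable def g1reachB (k : ℝ) (l b : ℝ) : ℝ :=
  (1 / k ^ 5) * (-l * k + b) *
    (b ^ 3 - b ^ 2 * k * l * (k + 2)
      + b * l * (k ^ 3 + 2 * k ^ 3 * l - 3 * k ^ 2 + k ^ 2 * l + 3 * k - 1)
      + l ^ 2 * k * (k ^ 3 - l * k ^ 3 - 3 * k ^ 2 + 3 * k - 1))

/-! The implicit-function relation `∂_λ g · f₁' + ∂_b g = 0` at `(1, 1)` gives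
`f₁'(1) = -∂_b g / ∂_λ g`. Both partial derivatives are read off from the factorisations
`g(λ, 1) = (λ - 1) p(λ)` and `g(1, b) = (b - 1) q(b)` as `p(1) = (k² + 3k + 1)(k - 1)³ / k⁵` and
`q(1) = -(3k + 2)(k - 1)³ / k⁵`; the common factor `(k - 1)³ / k⁵` cancels. -/

open Topology

section Implicit

variable {𝕜 : Type*} [NontriviallyNormedField 𝕜]

theorem hasDerivAt_sub_mul {h : 𝕜 → 𝕜} {a : 𝕜} (hh : DifferentiableAt 𝕜 h a) :
    HasDerivAt (fun x => (x - a) * h x) (h a) a := by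
  simpa using ((hasDerivAt_id a).sub_const a).fun_mul hh.hasDerivAt

theorem partialDeriv_mul_deriv_add_partialDeriv_eq_zero {G : 𝕜 → 𝕜 → 𝕜} {f : 𝕜 → 𝕜}
    {x₀ y₀ a c : 𝕜} (hG : DifferentiableAt 𝕜 (fun p : 𝕜 × 𝕜 => G p.1 p.2) (x₀, y₀))
    (hGx : HasDerivAt (fun x => G x y₀) a x₀) (hGy : HasDerivAt (fun y => G x₀ y) c y₀)
    (hf : DifferentiableAt 𝕜 f y₀) (hfy : f y₀ = x₀) (hzero : ∀ᶠ y in 𝓝 y₀, G (f y) y = 0) :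
    a * deriv f y₀ + c = 0 := by
  set L := fderiv 𝕜 (fun p : 𝕜 × 𝕜 => G p.1 p.2) (x₀, y₀)
  have hL := hG.hasFDerivAt
  have ha : a = L (1, 0) :=
    hGx.unique (hL.comp_hasDerivAt_of_eq _ ((hasDerivAt_id x₀).prodMk (hasDerivAt_const x₀ y₀)) rfl)
  have hc : c = L (0, 1) :=
    hGy.unique (hL.comp_hasDerivAt_of_eq _ ((hasDerivAt_const y₀ x₀).prodMk (hasDerivAt_id y₀)) rfl)
  have hcurve : HasDerivAt (fun y => G (f y) y) (L (deriv f y₀, 1)) y₀ :=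
    hL.comp_hasDerivAt_of_eq _ (hf.hasDerivAt.prodMk (hasDerivAt_id y₀)) (by rw [id, hfy])
  have hsplit : ((deriv f y₀, 1) : 𝕜 × 𝕜) = deriv f y₀ • ((1, 0) : 𝕜 × 𝕜) + (0, 1) := by
    simp
  calc a * deriv f y₀ + c = L (deriv f y₀, 1) := by
        rw [hsplit, map_add, map_smul, ha, hc, smul_eq_mul, mul_comm]
    _ = 0 := hcurve.unique ((hasDerivAt_const y₀ 0).congr_of_eventuallyEq hzero)

end Implicit

section BernoulliMatching

variable (k : ℝ)

theorem g1reachB_eq_sub_one_mul_left (l : ℝ) :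
    g1reachB k l 1 =
      (l - 1) * ((k ^ 5 * l ^ 3 + (k ^ 2 - 4 * k ^ 3) * l ^ 2 + (4 * k ^ 2 - k ^ 3) * l - 1) / k ^ 5) := by
  unfold g1reachB; ring

theorem g1reachB_eq_sub_one_mul_right (b : ℝ) :
    g1reachB k 1 b =
      (b - 1) * ((b - k) * (b ^ 2 + (1 - 2 * k - k ^ 2) * b + 3 * k ^ 3 - 3 * k ^ 2 + k) / k ^ 5) := by
  unfold g1reachB; ring

theorem g1reachB_one_one : g1reachB k 1 1 = 0 := by
  simp [g1reachB_eq_sub_one_mul_left]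

theorem differentiable_g1reachB : Differentiable ℝ (fun p : ℝ × ℝ => g1reachB k p.1 p.2) := by
  unfold g1reachB; fun_prop

theorem hasDerivAt_g1reachB_left :
    HasDerivAt (fun l => g1reachB k l 1) ((k ^ 2 + 3 * k + 1) * (k - 1) ^ 3 / k ^ 5) 1 := by
  rw [funext (g1reachB_eq_sub_one_mul_left k)]
  exact (hasDerivAt_sub_mul (by fun_prop)).congr_deriv (by ring)

theorem hasDerivAt_g1reachB_right :
    HasDerivAt (fun b => g1reachB k 1 b) (-(3 * k + 2) * (k - 1) ^ 3 / k ^ 5) 1 := by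
  rw [funext (g1reachB_eq_sub_one_mul_right k)]
  exact (hasDerivAt_sub_mul (by fun_prop)).congr_deriv (by ring)

end BernoulliMatching

/-- 1-reach Bernoulli matching: λ = 1 is a simple root of `g(·,1)`, and any
implicitly defined differentiable root `f₁` with `f₁ 1 = 1` has derivative
`(3k+2)/(k²+3k+1)` at `b = 1`; hence `γ_{k,1}^B = (3k+2)/(k²+3k+1)`. -/
theorem gamma_k1_B (k : ℝ) (hk : 2 ≤ k) :
    g1reachB k 1 1 = 0 ∧
    deriv (fun l => g1reachB k l 1) 1 ≠ 0 ∧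
    ∀ f₁ : ℝ → ℝ, f₁ 1 = 1 →
      (∀ᶠ b in nhds 1, g1reachB k (f₁ b) b = 0) →
      DifferentiableAt ℝ f₁ 1 →
      deriv f₁ 1 = (3 * k + 2) / (k ^ 2 + 3 * k + 1) := by
  have hk0 : 0 < k := by linarith
  have hk1 : 0 < k - 1 := by linarith
  have hpos : 0 < (k ^ 2 + 3 * k + 1) * (k - 1) ^ 3 / k ^ 5 := by positivity
  refine ⟨g1reachB_one_one k, (hasDerivAt_g1reachB_left k).deriv ▸ hpos.ne', ?_⟩
  intro f₁ hf₁ hzero hdiff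
  have h := partialDeriv_mul_deriv_add_partialDeriv_eq_zero
    (differentiable_g1reachB k _) (hasDerivAt_g1reachB_left k) (hasDerivAt_g1reachB_right k)
    hdiff hf₁ hzero
  rw [eq_div_iff (by positivity)]
  field_simp at h
  rw [mul_zero] at h
  linarith [(mul_eq_zero.1 h).resolve_left (by positivity)]
end

section
/- For a binary alphabet (k = 2), a configuration ε_{ij} ∈ {0,1} defined for |i−j| ≤ 1, 1 ≤ i,j ≤ n, is string realizable (i.e., there exist u,v ∈ {0,1}^n with ε_{ij} = δ_{u(i),v(j)} for all i,j in range) if and only if for all i ∈ {2,...,n}, ε_{i-1,i-1} + ε_{i,i-1} + ε_{i-1,i} + ε_{i,i} ∈ {0,2,4}. Moreover, when realizable, exactly 2 pairs (u,v) realize it. -/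
/-- `(u, v)` realizes the configuration `ε` on the band `|i - j| ≤ 1`:
`ε i j` equals the Kronecker delta `δ_{u(i), v(j)}` there. -/
def Realizes {n : ℕ} (ε : Fin n → Fin n → ℕ) (u v : Fin n → Fin 2) : Prop :=
  ∀ i j : Fin n, ((i : ℤ) - (j : ℤ)).natAbs ≤ 1 →
    ε i j = if u i = v j then 1 else 0

/-- `ε` as a `Fin 2` value, total on `ℕ × ℕ`. -/
def eN {n : ℕ} (ε : Fin n → Fin n → ℕ) (i j : ℕ) : Fin 2 :=
  if h : i < n ∧ j < n then (if ε ⟨i, h.1⟩ ⟨j, h.2⟩ = 1 then 1 else 0) else 0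

/-- The canonical first string with initial value `b`. -/
def Ufun {n : ℕ} (ε : Fin n → Fin n → ℕ) (b : Fin 2) : ℕ → Fin 2
  | 0 => b
  | i + 1 => Ufun ε b i + eN ε i i + eN ε (i + 1) i

def uu {n : ℕ} (ε : Fin n → Fin n → ℕ) (b : Fin 2) (i : Fin n) : Fin 2 :=
  Ufun ε b i

def vv {n : ℕ} (ε : Fin n → Fin n → ℕ) (b : Fin 2) (i : Fin n) : Fin 2 :=
  Ufun ε b i + 1 + eN ε i i

lemma fin2_cases (a : Fin 2) : a = 0 ∨ a = 1 := by omega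

lemma eN_eq {n : ℕ} (ε : Fin n → Fin n → ℕ) (i j : Fin n) :
    eN ε i j = if ε i j = 1 then 1 else 0 := by
  simp [eN, i.isLt, j.isLt]

lemma determined (a c : Fin 2) (m : ℕ) (h : m = if a = c then 1 else 0) :
    a = c + 1 + (if m = 1 then 1 else 0) := by
  by_cases hac : a = c
  · subst hac
    rw [if_pos rfl] at h
    subst h
    revert a; decide
  · rw [if_neg hac] at h
    subst h
    revert hac; revert a c; decide

lemma realizes_uu_vv {n : ℕ} (ε : Fin n → Fin n → ℕ)
    (hval : ∀ i j : Fin n, ((i : ℤ) - (j : ℤ)).natAbs ≤ 1 → ε i j = 0 ∨ ε i j = 1)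
    (hcond : ∀ i j : Fin n, (j : ℕ) = (i : ℕ) + 1 →
        ε i i + ε j i + ε i j + ε j j ∈ ({0, 2, 4} : Set ℕ))
    (b : Fin 2) : Realizes ε (uu ε b) (vv ε b) := by
  intro i j hij
  have hc : (i:ℕ)=(j:ℕ) ∨ (i:ℕ)=(j:ℕ)+1 ∨ (j:ℕ)=(i:ℕ)+1 := by omega
  rcases hc with hc | hc | hc
  · -- diagonal
    have hji : i = j := Fin.ext hc
    subst hji
    have hee := eN_eq ε i i
    rcases hval i i (by omega) with h | h <;>
    · simp only [uu, vv, hee, h]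
      generalize Ufun ε b (i:ℕ) = a
      revert a; decide
  · -- i = j + 1
    have hieq : i = ⟨(j:ℕ)+1, hc ▸ i.isLt⟩ := Fin.ext hc
    have hub : uu ε b i = Ufun ε b ((j:ℕ)+1) := by rw [uu, hc]
    have hjj : eN ε ((j:ℕ)+1) (j:ℕ) = if ε i j = 1 then 1 else 0 := by
      rw [hieq]
      simp [eN, hc ▸ i.isLt, j.isLt]
    rcases hval i j (by omega) with h | h <;>
    · simp only [hub, Ufun, vv, hjj, h]
      generalize Ufun ε b (j:ℕ) = a
      generalize eN ε (j:ℕ) (j:ℕ) = c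
      revert a c; decide
  · -- j = i + 1
    have hjeq : j = ⟨(i:ℕ)+1, hc ▸ j.isLt⟩ := Fin.ext hc
    have hvb : vv ε b j = Ufun ε b ((i:ℕ)+1) + 1 + eN ε ((i:ℕ)+1) ((i:ℕ)+1) := by
      rw [vv, hc]
    have hji : eN ε ((i:ℕ)+1) (i:ℕ) = if ε j i = 1 then 1 else 0 := by
      rw [hjeq]
      simp [eN, hc ▸ j.isLt, i.isLt]
    have hjj : eN ε ((i:ℕ)+1) ((i:ℕ)+1) = if ε j j = 1 then 1 else 0 := by
      rw [hjeq]
      simp [eN, hc ▸ j.isLt]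
    have heii := eN_eq ε i i
    have hsum := hcond i j hc
    simp only [Set.mem_insert_iff, Set.mem_singleton_iff] at hsum
    rcases hval i i (by omega) with h1 | h1 <;>
    rcases hval j i (by omega) with h2 | h2 <;>
    rcases hval i j (by omega) with h3 | h3 <;>
    rcases hval j j (by omega) with h4 | h4 <;>
      simp only [h1, h2, h3, h4] at hsum ⊢ <;>
      first
      | omega
      | (simp only [uu, hvb, Ufun, hji, hjj, heii, h1, h2, h4]
         generalize Ufun ε b (i:ℕ) = a
         revert a; decide)

lemma eq_of_realizes {n : ℕ} (hn : 1 ≤ n) (ε : Fin n → Fin n → ℕ)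
    (u v : Fin n → Fin 2) (h : Realizes ε u v) :
    ∀ i : ℕ, (hi : i < n) →
      u ⟨i, hi⟩ = Ufun ε (u ⟨0, hn⟩) i ∧
      v ⟨i, hi⟩ = Ufun ε (u ⟨0, hn⟩) i + 1 + eN ε i i := by
  intro i
  induction i with
  | zero =>
    intro hi
    refine ⟨rfl, ?_⟩
    have h0 := h ⟨0, hi⟩ ⟨0, hi⟩ (by simp)
    have hv := determined (v ⟨0, hi⟩) (u ⟨0, hi⟩) (ε ⟨0, hi⟩ ⟨0, hi⟩)
      (by rw [h0]; by_cases hh : u ⟨0, hi⟩ = v ⟨0, hi⟩ <;> simp [hh, eq_comm])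
    rw [hv]
    have he : eN ε 0 0 = if ε ⟨0, hi⟩ ⟨0, hi⟩ = 1 then 1 else 0 := by simp [eN, hi]
    rw [he, Ufun]
  | succ i ih =>
    intro hi
    have hi' : i < n := by omega
    obtain ⟨ihu, ihv⟩ := ih hi'
    have hd : ((↑(⟨i+1, hi⟩ : Fin n) : ℤ) - (↑(⟨i, hi'⟩ : Fin n) : ℤ)).natAbs ≤ 1 := by
      simp
    have h1 := h ⟨i+1, hi⟩ ⟨i, hi'⟩ hd
    have hu1 : u ⟨i+1, hi⟩ = v ⟨i, hi'⟩ + 1 + (if ε ⟨i+1, hi⟩ ⟨i, hi'⟩ = 1 then 1 else 0) :=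
      determined _ _ _ h1
    have heji : eN ε (i+1) i = if ε ⟨i+1, hi⟩ ⟨i, hi'⟩ = 1 then 1 else 0 := by
      simp [eN, hi, hi']
    have hustep : u ⟨i+1, hi⟩ = Ufun ε (u ⟨0, hn⟩) (i+1) := by
      rw [hu1, ihv, Ufun, heji]
      generalize Ufun ε (u ⟨0, hn⟩) i = a
      generalize eN ε i i = c
      generalize (if ε ⟨i+1, hi⟩ ⟨i, hi'⟩ = 1 then (1:Fin 2) else 0) = d
      revert a c d; decide
    refine ⟨hustep, ?_⟩
    have h2 := h ⟨i+1, hi⟩ ⟨i+1, hi⟩ (by simp)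
    have hv1 : v ⟨i+1, hi⟩ = u ⟨i+1, hi⟩ + 1 + (if ε ⟨i+1, hi⟩ ⟨i+1, hi⟩ = 1 then 1 else 0) :=
      determined _ _ _
        (by rw [h2]; by_cases hh : u ⟨i+1, hi⟩ = v ⟨i+1, hi⟩ <;> simp [hh, eq_comm])
    rw [hv1, hustep]
    congr 1
    simp [eN, hi]

lemma cond_of_realizes {n : ℕ} (ε : Fin n → Fin n → ℕ)
    (u v : Fin n → Fin 2) (h : Realizes ε u v) :
    ∀ i j : Fin n, (j : ℕ) = (i : ℕ) + 1 →
      ε i i + ε j i + ε i j + ε j j ∈ ({0, 2, 4} : Set ℕ) := by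
  intro i j hij
  rw [h i i (by omega), h j i (by omega), h i j (by omega), h j j (by omega)]
  simp only [Set.mem_insert_iff, Set.mem_singleton_iff]
  rcases fin2_cases (u i) with h1 | h1 <;> rcases fin2_cases (u j) with h2 | h2 <;>
  rcases fin2_cases (v i) with h3 | h3 <;> rcases fin2_cases (v j) with h4 | h4 <;>
    simp [h1, h2, h3, h4]

/-- For a binary alphabet, a band configuration `ε` (with entries in `{0,1}`
on the band) is string realizable iff every consecutive 2×2 block has entry
sum in `{0,2,4}`, in which case exactly 2 pairs `(u,v)` realize it. -/
theorem string_realizable_iff {n : ℕ} (hn : 1 ≤ n) (ε : Fin n → Fin n → ℕ)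
    (hval : ∀ i j : Fin n, ((i : ℤ) - (j : ℤ)).natAbs ≤ 1 → ε i j = 0 ∨ ε i j = 1) :
    ((∃ u v : Fin n → Fin 2, Realizes ε u v) ↔
      ∀ i j : Fin n, (j : ℕ) = (i : ℕ) + 1 →
        ε i i + ε j i + ε i j + ε j j ∈ ({0, 2, 4} : Set ℕ)) ∧
    ((∀ i j : Fin n, (j : ℕ) = (i : ℕ) + 1 →
        ε i i + ε j i + ε i j + ε j j ∈ ({0, 2, 4} : Set ℕ)) →
      Nat.card {p : (Fin n → Fin 2) × (Fin n → Fin 2) // Realizes ε p.1 p.2} = 2) := by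
  constructor
  · constructor
    · rintro ⟨u, v, h⟩
      exact cond_of_realizes ε u v h
    · intro hcond
      exact ⟨uu ε 0, vv ε 0, realizes_uu_vv ε hval hcond 0⟩
  · intro hcond
    have E : {p : (Fin n → Fin 2) × (Fin n → Fin 2) // Realizes ε p.1 p.2} ≃ Fin 2 :=
      { toFun := fun p => p.1.1 ⟨0, hn⟩
        invFun := fun b => ⟨(uu ε b, vv ε b), realizes_uu_vv ε hval hcond b⟩
        left_inv := by
          rintro ⟨⟨u, v⟩, hre⟩
          have key := eq_of_realizes hn ε u v hre
          refine Subtype.ext (Prod.ext ?_ ?_) <;> funext i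
          · simpa [uu] using ((key i i.isLt).1).symm
          · simpa [vv] using ((key i i.isLt).2).symm
        right_inv := fun b => rfl }
    rw [Nat.card_congr E, Nat.card_eq_fintype_card, Fintype.card_fin]
end
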